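/- arXiv:2004.05914 — 6 statements merged into one kernel-verified Lean document; each statement's English description precedes it below -/
import Mathlib

section
/- Let σ(t) = 1/(1 + exp(−t)) and F(w, b) = σ(b − w)² + (σ(w + b) − 1)². Then for every (w, b) ∈ ℝ², the sum of the two partial derivatives satisfies ∂F/∂b(w, b) + ∂F/∂w(w, b) = 4(σ(w + b) − 1)σ′(w + b) < 0. In particular, F has no critical points: its gradient is nonzero at every point of ℝ². -/
/-!
Differentiating along the diagonal direction `(1, 1)` leaves `b - w` fixed, so the term
`σ(b - w)²` drops out of `∂F/∂b + ∂F/∂w` and only the chain rule for `(σ(w + b) - 1)²`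
survives. Since `0 < σ < 1` and `σ' = σ(1 - σ) > 0`, the result is negative, so the two
partial derivatives cannot vanish simultaneously.
-/

open Real

section DiagonalDerivative

variable {φ ψ : ℝ → ℝ} {w b : ℝ}

theorem deriv_add_deriv_of_comp_sub_add (hφ : DifferentiableAt ℝ φ (b - w))
    (hψ : DifferentiableAt ℝ ψ (w + b)) :
    deriv (fun b' => φ (b' - w) + ψ (w + b')) b + deriv (fun w' => φ (b - w') + ψ (w' + b)) w
      = 2 * deriv ψ (w + b) := by
  have hb : HasDerivAt (fun b' => φ (b' - w) + ψ (w + b')) (deriv φ (b - w) + deriv ψ (w + b)) b :=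
    (hφ.hasDerivAt.comp_sub_const b w).add (hψ.hasDerivAt.comp_const_add w b)
  have hw : HasDerivAt (fun w' => φ (b - w') + ψ (w' + b))
      (-deriv φ (b - w) + deriv ψ (w + b)) w :=
    (hφ.hasDerivAt.comp_const_sub b w).add (hψ.hasDerivAt.comp_add_const w b)
  rw [hb.deriv, hw.deriv]
  ring

theorem deriv_add_deriv_of_sq_comp_sub_add {g : ℝ → ℝ} (hg₁ : DifferentiableAt ℝ g (b - w))
    (hg₂ : DifferentiableAt ℝ g (w + b)) :
    deriv (fun b' => g (b' - w) ^ 2 + (g (w + b') - 1) ^ 2) b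
        + deriv (fun w' => g (b - w') ^ 2 + (g (w' + b) - 1) ^ 2) w
      = 4 * (g (w + b) - 1) * deriv g (w + b) := by
  have hsq : deriv (fun t => (g t - 1) ^ 2) (w + b) = 2 * (g (w + b) - 1) * deriv g (w + b) := by
    simpa using ((hg₂.hasDerivAt.sub_const 1).fun_pow 2).deriv
  have key := deriv_add_deriv_of_comp_sub_add (φ := fun t => g t ^ 2)
    (ψ := fun t => (g t - 1) ^ 2) (hg₁.pow 2) ((hg₂.sub_const 1).pow 2)
  rw [key, hsq]
  ring

end DiagonalDerivative

theorem sigmoid_sub_one_mul_deriv_sigmoid_neg (x : ℝ) : (sigmoid x - 1) * deriv sigmoid x < 0 := by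
  have hderiv : 0 < deriv sigmoid x := by
    rw [deriv_sigmoid]
    exact mul_pos (sigmoid_pos x) (sub_pos.2 (sigmoid_lt_one x))
  exact mul_neg_of_neg_of_pos (sub_neg.2 (sigmoid_lt_one x)) hderiv

/-- The normal-training loss `F(w, b) = σ(b − w)² + (σ(w + b) − 1)²` satisfies
`∂F/∂b + ∂F/∂w = 4(σ(w + b) − 1)σ′(w + b) < 0` everywhere; in particular `F` has
no critical points. -/
theorem stmt_6 :
    let σ : ℝ → ℝ := fun t => 1 / (1 + Real.exp (-t))
    let F : ℝ → ℝ → ℝ := fun w b => σ (b - w) ^ 2 + (σ (w + b) - 1) ^ 2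
    ∀ w b : ℝ,
      deriv (fun b' => F w b') b + deriv (fun w' => F w' b) w
          = 4 * (σ (w + b) - 1) * deriv σ (w + b) ∧
      4 * (σ (w + b) - 1) * deriv σ (w + b) < 0 ∧
      ¬(deriv (fun b' => F w b') b = 0 ∧ deriv (fun w' => F w' b) w = 0) := by
  intro σ F w b
  have hσ : σ = sigmoid := funext fun t => one_div _
  have hσd : Differentiable ℝ σ := hσ ▸ differentiable_sigmoid
  have hsum : deriv (fun b' => F w b') b + deriv (fun w' => F w' b) w
      = 4 * (σ (w + b) - 1) * deriv σ (w + b) :=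
    deriv_add_deriv_of_sq_comp_sub_add (hσd _) (hσd _)
  have hneg : 4 * (σ (w + b) - 1) * deriv σ (w + b) < 0 := by
    rw [hσ]
    linarith [sigmoid_sub_one_mul_deriv_sigmoid_neg (w + b)]
  refine ⟨hsum, hneg, fun ⟨hb, hw⟩ => ?_⟩
  rw [hb, hw] at hsum
  linarith
end

section
/- Let σ(t) = 1/(1 + exp(−t)) and F(w, b) = σ(b − w)² + (σ(w + b) − 1)². Then for every w ∈ ℝ, ∂F/∂w(w, 0) = −4 σ(w) σ(−w)² = −4 / ((1 + e^{−w})(1 + e^{w})²). Consequently, for a regularization constant λ > 0 and w > 0, the function w ↦ F(w, 0) + λ w has derivative zero at w if and only if λ (1 + e^{w})² (1 + e^{−w}) = 4. -/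
/-!
With `σ = Real.sigmoid`, the symmetry `σ(-t) = 1 - σ(t)` collapses the loss at zero bias to
`F(w, 0) = 2σ(-w)²`, and `σ' = σ(1 - σ)` then gives `∂F/∂w(w, 0) = -4σ(w)σ(-w)²`.
Since `σ(w)σ(-w)² = 1/((1 + e^{-w})(1 + e^{w})²)` is positive, the derivative `-4σ(w)σ(-w)² + λ`
of the regularized loss vanishes exactly when `λ(1 + e^{w})²(1 + e^{-w}) = 4`.
-/

open Real

namespace Real

lemma sigmoid_eq_one_div (t : ℝ) : sigmoid t = 1 / (1 + exp (-t)) :=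
  (one_div _).symm

lemma sigmoid_mul_sigmoid_neg_sq (w : ℝ) :
    sigmoid w * sigmoid (-w) ^ 2 = 1 / ((1 + exp (-w)) * (1 + exp w) ^ 2) := by
  rw [sigmoid_def, sigmoid_def, neg_neg]
  field_simp

end Real

/-- The square loss of `x ↦ σ(w x + b)` on the samples `(-1, 0)` and `(1, 1)`. -/
noncomputable def perceptronLoss (w b : ℝ) : ℝ :=
  sigmoid (b - w) ^ 2 + (sigmoid (w + b) - 1) ^ 2

lemma perceptronLoss_zero_right (w : ℝ) : perceptronLoss w 0 = 2 * sigmoid (-w) ^ 2 := by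
  rw [perceptronLoss, zero_sub, add_zero, sigmoid_neg]
  ring

lemma hasDerivAt_perceptronLoss_zero_right (w : ℝ) :
    HasDerivAt (fun w' => perceptronLoss w' 0) (-4 * sigmoid w * sigmoid (-w) ^ 2) w := by
  have hσ : HasDerivAt (fun w' => sigmoid (-w')) (sigmoid (-w) * (1 - sigmoid (-w)) * -1) w :=
    (hasDerivAt_sigmoid (-w)).comp w (hasDerivAt_neg w)
  have hσ_neg : 1 - sigmoid (-w) = sigmoid w := by rw [sigmoid_neg, sub_sub_cancel]
  rw [funext perceptronLoss_zero_right]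
  refine ((hσ.fun_pow 2).const_mul 2).congr_deriv ?_
  rw [hσ_neg]
  ring

lemma deriv_perceptronLoss_add_mul_eq_zero_iff (lam w : ℝ) :
    deriv (fun w' => perceptronLoss w' 0 + lam * w') w = 0 ↔
      lam * (1 + exp w) ^ 2 * (1 + exp (-w)) = 4 := by
  rw [((hasDerivAt_perceptronLoss_zero_right w).fun_add
      ((hasDerivAt_id' w).const_mul lam)).deriv, mul_assoc, sigmoid_mul_sigmoid_neg_sq]
  field_simp
  constructor <;> intro h <;> linarith

/-- For the normal-training loss `F(w, b) = σ(b − w)² + (σ(w + b) − 1)²` one has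
`∂F/∂w(w, 0) = −4σ(w)σ(−w)² = −4/((1 + e^{−w})(1 + e^{w})²)`; consequently, for a
regularization constant `λ > 0` and `w > 0`, the regularized loss `w ↦ F(w, 0) + λw`
is stationary at `w` iff `λ(1 + e^{w})²(1 + e^{−w}) = 4`. -/
theorem stmt_9 :
    let σ : ℝ → ℝ := fun t => 1 / (1 + Real.exp (-t))
    let F : ℝ → ℝ → ℝ := fun w b => σ (b - w) ^ 2 + (σ (w + b) - 1) ^ 2
    ∀ w : ℝ,
      deriv (fun w' => F w' 0) w = -4 * σ w * σ (-w) ^ 2 ∧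
      deriv (fun w' => F w' 0) w
        = -4 / ((1 + Real.exp (-w)) * (1 + Real.exp w) ^ 2) ∧
      (∀ lam : ℝ, 0 < lam → 0 < w →
        (deriv (fun w' => F w' 0 + lam * w') w = 0 ↔
          lam * (1 + Real.exp w) ^ 2 * (1 + Real.exp (-w)) = 4)) := by
  intro σ F w
  have hσ : σ = sigmoid := funext fun t => (sigmoid_eq_one_div t).symm
  have hF : F = perceptronLoss := by simp only [F, hσ]; rfl
  have hderiv := (hasDerivAt_perceptronLoss_zero_right w).deriv
  simp only [hF, hσ]
  refine ⟨hderiv, ?_, fun lam _ _ => deriv_perceptronLoss_add_mul_eq_zero_iff lam w⟩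
  rw [hderiv, mul_assoc, sigmoid_mul_sigmoid_neg_sq, mul_one_div]
end

section
/- Let σ(t) = 1/(1 + exp(−t)) and, for a budget η ∈ ℝ, define the restricted adversarial-training loss F_AT(w, b) = (1/2)[σ(b − w)² + (σ(w + b) − 1)²] + (1/2)[σ(b + (η − 1)w)² + (σ((1 − η)w + b) − 1)²]. Then for every w ∈ ℝ and every η ∈ ℝ, ∂F_AT/∂b(w, 0) = 0. In particular, the perfect decision boundary b = 0 is stationary in the bias direction for restricted adversarial training with any budget, so restricted adversarial training can reach the model with the best robustness (this is the stationarity part of Proposition 1). -/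
/-!
Since `σ (-t) = 1 - σ t`, reflecting the bias `b ↦ -b` swaps the two terms of the square loss
`σ (b - c) ^ 2 + (σ (c + b) - 1) ^ 2` of `x ↦ σ (c x + b)` on the points `(-1, 0)` and `(1, 1)`.
The adversarial loss is the average of this loss for `c = w` (clean points) and
`c = (1 - η) w` (adversarial points), so `b ↦ F_AT (w, b)` is even, and an even function has
derivative zero at the origin.
-/

open Real

theorem Function.Even.deriv_zero {F : Type*} [NormedAddCommGroup F] [NormedSpace ℝ F]
    {f : ℝ → F} (hf : f.Even) : deriv f 0 = 0 := by
  have h : deriv f 0 = -deriv f 0 := by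
    simpa only [hf.eq, neg_zero] using deriv_comp_neg (f := f) (x := (0 : ℝ))
  have h2 : (2 : ℝ) • deriv f 0 = 0 := by
    rw [two_smul]
    nth_rewrite 2 [h]
    exact add_neg_cancel _
  exact (smul_eq_zero.mp h2).resolve_left two_ne_zero

noncomputable def sigmoidSqLoss (c b : ℝ) : ℝ :=
  sigmoid (b - c) ^ 2 + (sigmoid (c + b) - 1) ^ 2

theorem even_sigmoidSqLoss (c : ℝ) : (sigmoidSqLoss c).Even := by
  intro b
  have h₁ : sigmoid (-b - c) = 1 - sigmoid (c + b) := by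
    rw [← sigmoid_neg]; ring_nf
  have h₂ : sigmoid (c + -b) = 1 - sigmoid (b - c) := by
    rw [← sigmoid_neg]; ring_nf
  rw [sigmoidSqLoss, sigmoidSqLoss, h₁, h₂]
  ring

/-- For the restricted adversarial-training loss with any budget `η`, the perfect
decision boundary `b = 0` is stationary in the bias direction (the stationarity part
of Proposition 1). -/
theorem stmt_12 :
    let σ : ℝ → ℝ := fun t => 1 / (1 + Real.exp (-t))
    ∀ η : ℝ,
      let Fat : ℝ → ℝ → ℝ := fun w b =>
        (1 / 2) * (σ (b - w) ^ 2 + (σ (w + b) - 1) ^ 2) +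
        (1 / 2) * (σ (b + (η - 1) * w) ^ 2 + (σ ((1 - η) * w + b) - 1) ^ 2)
      ∀ w : ℝ, deriv (fun b => Fat w b) 0 = 0 := by
  intro σ η Fat w
  have hσ : σ = sigmoid := funext fun t => one_div _
  have hFat : (fun b => Fat w b) =
      (1 / 2 : ℝ) • sigmoidSqLoss w + (1 / 2 : ℝ) • sigmoidSqLoss ((1 - η) * w) := by
    funext b
    simp only [Fat, hσ, sigmoidSqLoss, Pi.add_apply, Pi.smul_apply, smul_eq_mul]
    ring_nf
  rw [hFat]
  exact (((even_sigmoidSqLoss w).const_smul _).add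
    ((even_sigmoidSqLoss _).const_smul _)).deriv_zero
end

section
/- Let σ(t) = 1/(1 + exp(−t)) and F(w, b) = σ(b − w)² + (σ(w + b) − 1)². Then for every w ∈ ℝ, the second partial derivative of F in the bias direction at (w, 0) equals ∂²F/∂b²(w, 0) = 4 σ′(w)(1 − σ(w))(3σ(w) − 1), and this quantity is strictly positive for every w > −ln 2 (in particular for every w > 0). -/
/-!
Since `σ(t) - 1 = -σ(-t)`, the loss is `F(w, b) = q(b - w) + q(-w - b)` with `q = σ²`, so its
bias curvature at `b = 0` is `2 q''(-w)`. The logistic equation `σ' = σ (1 - σ)` gives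
`q'' = 2 σ² (1 - σ) (2 - 3σ)`, and `σ(-w) = 1 - σ(w)` turns `2 q''(-w)` into
`4 σ'(w) (1 - σ(w)) (3 σ(w) - 1)`. The last factor is positive exactly when
`σ(w) > 1/3 = σ(-log 2)`.
-/

open Real

section ReflectedPair

variable {𝕜 F : Type*} [NontriviallyNormedField 𝕜] [NormedAddCommGroup F] [NormedSpace 𝕜 F]
  {q q' : 𝕜 → F}

lemma hasDerivAt_comp_sub_add_comp_const_sub (hq : ∀ x, HasDerivAt q (q' x) x) (w b : 𝕜) :
    HasDerivAt (fun b => q (b - w) + q (-w - b)) (q' (b - w) - q' (-w - b)) b := by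
  simpa only [sub_eq_add_neg] using
    (hq (b - w)).comp_sub_const b w |>.fun_add ((hq (-w - b)).comp_const_sub (-w) b)

lemma hasDerivAt_comp_sub_sub_comp_const_sub_zero {q'' : F} {w : 𝕜}
    (hq : HasDerivAt q q'' (-w)) :
    HasDerivAt (fun b => q (b - w) - q (-w - b)) (q'' + q'') 0 := by
  have hleft : HasDerivAt q q'' (0 - w) := by rwa [zero_sub]
  have hright : HasDerivAt q q'' (-w - 0) := by rwa [sub_zero]
  simpa only [sub_neg_eq_add] using
    (hleft.comp_sub_const 0 w).fun_sub (hright.comp_const_sub (-w) 0)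

end ReflectedPair

lemma hasDerivAt_sigmoid_sq (x : ℝ) :
    HasDerivAt (fun x => sigmoid x ^ 2) (2 * sigmoid x ^ 2 * (1 - sigmoid x)) x :=
  ((hasDerivAt_sigmoid x).fun_pow 2).congr_deriv (by push_cast; ring)

lemma hasDerivAt_two_mul_sigmoid_sq_mul_one_sub (x : ℝ) :
    HasDerivAt (fun x => 2 * sigmoid x ^ 2 * (1 - sigmoid x))
      (2 * sigmoid x ^ 2 * (1 - sigmoid x) * (2 - 3 * sigmoid x)) x := by
  have hσ := hasDerivAt_sigmoid x
  exact (((hσ.fun_pow 2).const_mul 2).fun_mul (hσ.const_sub 1)).congr_deriv (by push_cast; ring)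

lemma sigmoid_neg_log_two : sigmoid (-log 2) = 3⁻¹ := by
  rw [sigmoid_def, neg_neg, exp_log two_pos]
  norm_num

lemma three_mul_sigmoid_sub_one_pos {w : ℝ} (hw : -log 2 < w) : 0 < 3 * sigmoid w - 1 := by
  have hthird : 3⁻¹ < sigmoid w := sigmoid_neg_log_two ▸ sigmoid_lt hw
  linarith

/-- For the normal-training loss `F(w, b) = σ(b − w)² + (σ(w + b) − 1)²`, the second
partial derivative in the bias direction at `(w, 0)` equals
`4σ′(w)(1 − σ(w))(3σ(w) − 1)`, which is strictly positive for every `w > −ln 2`. -/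
theorem stmt_14 :
    let σ : ℝ → ℝ := fun t => 1 / (1 + Real.exp (-t))
    let F : ℝ → ℝ → ℝ := fun w b => σ (b - w) ^ 2 + (σ (w + b) - 1) ^ 2
    ∀ w : ℝ,
      deriv (fun b => deriv (fun b' => F w b') b) 0
        = 4 * deriv σ w * (1 - σ w) * (3 * σ w - 1) ∧
      (-Real.log 2 < w → 0 < 4 * deriv σ w * (1 - σ w) * (3 * σ w - 1)) := by
  intro σ F w
  have hσ : σ = sigmoid := funext fun t => one_div _
  have hF : (fun b => F w b) = fun b => sigmoid (b - w) ^ 2 + sigmoid (-w - b) ^ 2 := by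
    funext b
    rw [show -w - b = -(w + b) by ring, sigmoid_neg]
    simp only [F, hσ]
    ring
  have hslope : deriv (fun b => F w b) =
      fun b => 2 * sigmoid (b - w) ^ 2 * (1 - sigmoid (b - w)) -
        2 * sigmoid (-w - b) ^ 2 * (1 - sigmoid (-w - b)) := by
    rw [hF]
    exact funext fun b => (hasDerivAt_comp_sub_add_comp_const_sub hasDerivAt_sigmoid_sq w b).deriv
  rw [hσ, deriv_sigmoid]
  constructor
  · rw [hslope, (hasDerivAt_comp_sub_sub_comp_const_sub_zero
      (hasDerivAt_two_mul_sigmoid_sq_mul_one_sub (-w))).deriv, sigmoid_neg]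
    ring
  · intro hw
    have := three_mul_sigmoid_sub_one_pos hw
    have := sub_pos.2 (sigmoid_lt_one w)
    have := sigmoid_pos w
    positivity
end

section
/- Let σ(t) = 1/(1 + exp(−t)) and define A(t) = σ′(t)(1 − σ(t))(3σ(t) − 1). Then for every η ∈ (0, 1) there exists w₀ > 0 such that for all w > w₀, A((1 − η)w) > A(w). Consequently, for all sufficiently large w, the bias-direction curvature of the adversarial-training loss exceeds that of the normal-training loss at the perfect decision boundary: 2A(w) + 2A((1 − η)w) > 4A(w). This is the acceleration claim of Proposition 1: a prescribed adversarial budget η ∈ (0, 1) strictly increases the curvature of the loss at the optimum, accelerating the learning of the bias. -/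
/-!
Since `σ' = σ (1 - σ)`, the function `A` is `p ∘ σ` for the quartic `p s = s (1 - s)² (3s - 1)`.
The quartic decreases on `[2/3, 1]` and `σ` is increasing with `σ (log 2) = 2/3`, so `A` is strictly
decreasing on `[log 2, ∞)`; once `(1 - η) w ≥ log 2` this gives `A ((1 - η) w) > A w`.
-/

open Real Set

-- `p' s = (1 - s)(9s - 1 - 12s²)`, which is negative for `s > (9 + √33)/24 ≈ 0.61`.
lemma strictAntiOn_mul_one_sub_sq_mul_three_mul_sub_one :
    StrictAntiOn (fun s : ℝ => s * (1 - s) ^ 2 * (3 * s - 1)) (Icc (2 / 3) 1) := by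
  rintro x ⟨hx, -⟩ y ⟨-, hy⟩ hxy
  have hd : 0 < y - x := sub_pos.2 hxy
  have ha : 0 ≤ x - 2 / 3 := sub_nonneg.2 hx
  have hb : 0 ≤ 1 - y := sub_nonneg.2 hy
  nlinarith [mul_pos hd hd, mul_nonneg ha hb, mul_pos (mul_pos hd hd) hd,
    mul_nonneg (mul_nonneg ha hb) hd.le, mul_nonneg ha hd.le, mul_nonneg hb hd.le,
    mul_nonneg (mul_nonneg ha ha) hd.le, mul_nonneg (mul_nonneg hb hb) hd.le]

lemma sigmoid_log_two : sigmoid (log 2) = 2 / 3 := by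
  rw [sigmoid_def, exp_neg, exp_log two_pos]
  norm_num

noncomputable def biasCurvature (t : ℝ) : ℝ :=
  deriv sigmoid t * (1 - sigmoid t) * (3 * sigmoid t - 1)

lemma strictAntiOn_biasCurvature : StrictAntiOn biasCurvature (Ici (log 2)) := by
  intro x hx y hy hxy
  have hσ : ∀ t ∈ Ici (log 2), sigmoid t ∈ Icc (2 / 3) 1 := fun t ht =>
    ⟨sigmoid_log_two ▸ sigmoid_le ht, sigmoid_le_one t⟩
  have h := strictAntiOn_mul_one_sub_sq_mul_three_mul_sub_one (hσ x hx) (hσ y hy) (sigmoid_lt hxy)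
  simp only [biasCurvature, deriv_sigmoid] at h ⊢
  linarith

/-- Acceleration claim of Proposition 1: with `A(t) = σ′(t)(1 − σ(t))(3σ(t) − 1)`,
for every budget `η ∈ (0, 1)` there is `w₀ > 0` such that for all `w > w₀` one has
`A((1 − η)w) > A(w)`, and hence `2A(w) + 2A((1 − η)w) > 4A(w)`: the bias-direction
curvature of the adversarial-training loss exceeds that of the normal-training loss. -/
theorem stmt_15 (η : ℝ) (h0 : 0 < η) (h1 : η < 1) :
    let σ : ℝ → ℝ := fun t => 1 / (1 + Real.exp (-t))
    let A : ℝ → ℝ := fun t => deriv σ t * (1 - σ t) * (3 * σ t - 1)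
    ∃ w₀ > (0 : ℝ), ∀ w > w₀,
      A ((1 - η) * w) > A w ∧
      2 * A w + 2 * A ((1 - η) * w) > 4 * A w := by
  intro σ A
  have hA : A = biasCurvature := by
    have hσ : σ = sigmoid := funext fun t => one_div _
    simp only [A, hσ]
    rfl
  have h1η : 0 < 1 - η := sub_pos.2 h1
  have hw₀ : 0 < log 2 / (1 - η) := div_pos (log_pos one_lt_two) h1η
  refine ⟨log 2 / (1 - η), hw₀, fun w hw => ?_⟩
  have hlog : log 2 ≤ (1 - η) * w := by linarith [(div_lt_iff₀ h1η).1 hw]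
  have hshrink : (1 - η) * w < w := by nlinarith [mul_pos h0 (hw₀.trans hw)]
  have hlt : A w < A ((1 - η) * w) := by
    rw [hA]
    exact strictAntiOn_biasCurvature hlog (hlog.trans hshrink.le) hshrink
  exact ⟨hlt, by linarith⟩
end

section
/- Let σ(t) = 1/(1 + exp(−t)), let F(w, b) = σ(b − w)² + (σ(w + b) − 1)² be the normal-training loss, and for η₁, η₂ ∈ ℝ define the unrestricted adversarial-training loss G(w, b) = (1/2)[σ(b − w)² + (σ(w + b) − 1)²] + (1/2)[σ((η₁ − 1)w + b)² + (σ((1 − η₂)w + b) − 1)²]. Suppose η₁ + η₂ = 2 and (η₁ − 1)w + b = 0, i.e. both adversarial examples lie exactly on the current decision boundary of the model (w, b). Then ∇G(w, b) = (1/2) ∇F(w, b): the adversarial terms contribute exactly zero to both partial derivatives ∂G/∂w and ∂G/∂b at (w, b), so the gradient of the unrestricted adversarial-training loss is exactly half the gradient of the normal-training loss. This is the key computation behind Proposition 2: adversarial examples placed on the decision boundary exert no force on the model. -/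
/-!
The adversarial terms of `G` are `ℓ((η₁ - 1) w + b)` with `ℓ t = σ(t)² + (σ(t) - 1)²`, because
`η₁ + η₂ = 2` makes both adversarial logits equal. Since `σ(-t) = 1 - σ(t)`, the loss `ℓ` is even, so
`ℓ'(0) = 0`: on the decision boundary the logit is `0`, and the adversarial terms have zero gradient.
-/

open Real

theorem Function.Even.deriv_zero_s16 {f : ℝ → ℝ} (hf : Function.Even f) : deriv f 0 = 0 := by
  have h := deriv_comp_neg f 0
  simp only [neg_zero, hf.eq] at h
  linarith

noncomputable def sigmoidPairLoss (t : ℝ) : ℝ := sigmoid t ^ 2 + (sigmoid t - 1) ^ 2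

theorem sigmoidPairLoss_even : Function.Even sigmoidPairLoss := fun t => by
  simp only [sigmoidPairLoss, sigmoid_neg]
  ring

theorem hasDerivAt_sigmoidPairLoss_zero : HasDerivAt sigmoidPairLoss 0 0 := by
  have hd : DifferentiableAt ℝ sigmoidPairLoss 0 := by
    unfold sigmoidPairLoss
    fun_prop
  simpa only [sigmoidPairLoss_even.deriv_zero_s16] using hd.hasDerivAt

theorem HasDerivAt.sigmoidPairLoss_of_eq_zero {f : ℝ → ℝ} {f' x : ℝ} (hf : HasDerivAt f f' x)
    (hx : f x = 0) : HasDerivAt (fun y => sigmoidPairLoss (f y)) 0 x := by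
  have hℓ : HasDerivAt sigmoidPairLoss 0 (f x) := by rw [hx]; exact hasDerivAt_sigmoidPairLoss_zero
  exact (hℓ.comp x hf).congr_deriv (zero_mul f')

/-- Key computation behind Proposition 2: if the adversarial examples lie exactly on
the current decision boundary (`η₁ + η₂ = 2` and `(η₁ − 1)w + b = 0`), then the
gradient of the unrestricted adversarial-training loss `G` at `(w, b)` is exactly half
the gradient of the normal-training loss `F`. -/
theorem stmt_16 (η₁ η₂ w b : ℝ) (hsum : η₁ + η₂ = 2)
    (hbd : (η₁ - 1) * w + b = 0) :
    let σ : ℝ → ℝ := fun t => 1 / (1 + Real.exp (-t))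
    let F : ℝ → ℝ → ℝ := fun w' b' => σ (b' - w') ^ 2 + (σ (w' + b') - 1) ^ 2
    let G : ℝ → ℝ → ℝ := fun w' b' =>
      (1 / 2) * (σ (b' - w') ^ 2 + (σ (w' + b') - 1) ^ 2) +
      (1 / 2) * (σ ((η₁ - 1) * w' + b') ^ 2 + (σ ((1 - η₂) * w' + b') - 1) ^ 2)
    deriv (fun w' => G w' b) w = (1 / 2) * deriv (fun w' => F w' b) w ∧
    deriv (fun b' => G w b') b = (1 / 2) * deriv (fun b' => F w b') b := by
  intro σ F G
  have hσ : σ = sigmoid := funext fun t => one_div _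
  have hG : ∀ w' b', G w' b' = 1 / 2 * F w' b' + 1 / 2 * sigmoidPairLoss ((η₁ - 1) * w' + b') := by
    simp only [G, F, hσ, sigmoidPairLoss, show 1 - η₂ = η₁ - 1 by linarith, implies_true]
  have hFw : DifferentiableAt ℝ (fun w' => F w' b) w := by simp only [F, hσ]; fun_prop
  have hFb : DifferentiableAt ℝ (fun b' => F w b') b := by simp only [F, hσ]; fun_prop
  have hadv_w := (((hasDerivAt_id w).const_mul (η₁ - 1)).add_const b).sigmoidPairLoss_of_eq_zero
    (by simpa using hbd)
  have hadv_b := ((hasDerivAt_id b).const_add ((η₁ - 1) * w)).sigmoidPairLoss_of_eq_zero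
    (by simpa using hbd)
  have hGw := (hFw.hasDerivAt.const_mul (1 / 2)).add (hadv_w.const_mul (1 / 2))
  have hGb := (hFb.hasDerivAt.const_mul (1 / 2)).add (hadv_b.const_mul (1 / 2))
  rw [mul_zero, add_zero] at hGw hGb
  simp only [hG]
  exact ⟨hGw.deriv, hGb.deriv⟩
end
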